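/- arXiv:2410.21080 — 3 statements merged into one kernel-verified Lean document; each statement's English description precedes it below -/
import Mathlib

section
/- The quantum correction term admits the divergence form: for smooth ρ > 0 on 𝕋^d, (1/2) ρ ∇(Δ√ρ / √ρ) = ∇ · ((1/4) ∇²ρ − ∇√ρ ⊗ ∇√ρ), where ∇²ρ is the Hessian matrix of ρ and the divergence of a matrix field is taken row-wise. -/
/- STATEMENT 8: divergence form of the quantum correction: for smooth ρ > 0,
(1/2) ρ ∇(Δ√ρ/√ρ) = ∇·((1/4)∇²ρ − ∇√ρ ⊗ ∇√ρ), componentwise: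
(1/2) ρ ∂ⱼ(Δ√ρ/√ρ) = ∑ᵢ ∂ᵢ((1/4) ∂ᵢ∂ⱼρ − ∂ᵢ√ρ ∂ⱼ√ρ). -/

noncomputable section

open scoped BigOperators

abbrev Ed (d : ℕ) := EuclideanSpace ℝ (Fin d)

/-- Partial derivative in the i-th coordinate direction. -/
def pd {d : ℕ} (i : Fin d) (f : Ed d → ℝ) (x : Ed d) : ℝ :=
  fderiv ℝ f x (EuclideanSpace.single i (1 : ℝ))

section helpers
variable {d : ℕ} {f g : Ed d → ℝ} {x : Ed d} {i j : Fin d}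

lemma contDiff_pd (i : Fin d) (hf : ContDiff ℝ (⊤ : ℕ∞) f) :
    ContDiff ℝ (⊤ : ℕ∞) (pd i f) := by
  unfold pd
  exact (hf.fderiv_right (by exact_mod_cast le_refl _)).clm_apply contDiff_const

lemma pd_mul (hf : DifferentiableAt ℝ f x) (hg : DifferentiableAt ℝ g x) :
    pd i (fun y => f y * g y) x = pd i f x * g x + f x * pd i g x := by
  unfold pd
  rw [fderiv_fun_mul hf hg]
  simp; ring

lemma pd_sub (hf : DifferentiableAt ℝ f x) (hg : DifferentiableAt ℝ g x) :
    pd i (fun y => f y - g y) x = pd i f x - pd i g x := by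
  unfold pd; rw [fderiv_fun_sub hf hg]; simp

lemma pd_const_mul (hf : DifferentiableAt ℝ f x) (c : ℝ) :
    pd i (fun y => c * f y) x = c * pd i f x := by
  unfold pd; rw [fderiv_const_mul hf c]; simp

lemma pd_sum {ι : Type*} (s : Finset ι) (F : ι → Ed d → ℝ)
    (h : ∀ k ∈ s, DifferentiableAt ℝ (F k) x) :
    pd i (fun y => ∑ k ∈ s, F k y) x = ∑ k ∈ s, pd i (F k) x := by
  unfold pd; rw [fderiv_fun_sum h]; simp

lemma pd_inv (hg : DifferentiableAt ℝ g x) (hx : g x ≠ 0) :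
    pd i (fun y => (g y)⁻¹) x = -(pd i g x) / (g x) ^ 2 := by
  unfold pd
  rw [show (fun y => (g y)⁻¹) = Inv.inv ∘ g from rfl,
    fderiv_comp x (differentiableAt_inv hx) hg, fderiv_inv]
  simp
  ring

lemma pd_div (hf : DifferentiableAt ℝ f x) (hg : DifferentiableAt ℝ g x) (hx : g x ≠ 0) :
    pd i (fun y => f y / g y) x = (pd i f x * g x - f x * pd i g x) / (g x) ^ 2 := by
  have h1 : (fun y => f y / g y) = fun y => f y * (g y)⁻¹ := by
    funext y; rw [div_eq_mul_inv]
  rw [h1, pd_mul (g := fun y => (g y)⁻¹) hf (hg.inv hx), pd_inv hg hx]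
  field_simp
  ring

lemma pd_swap (hf : ContDiff ℝ (⊤ : ℕ∞) f) (i j : Fin d) (x : Ed d) :
    pd i (pd j f) x = pd j (pd i f) x := by
  have hd1 : Differentiable ℝ f := hf.differentiable (by simp)
  have hfd : ContDiff ℝ (⊤ : ℕ∞) (fderiv ℝ f) :=
    hf.fderiv_right (by exact_mod_cast le_refl _)
  have hd2 : DifferentiableAt ℝ (fderiv ℝ f) x :=
    (hfd.differentiable (by simp)) x
  have key : ∀ v w : Ed d, fderiv ℝ (fun y => fderiv ℝ f y w) x v
      = fderiv ℝ (fderiv ℝ f) x v w := by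
    intro v w
    rw [show (fun y => fderiv ℝ f y w)
        = (ContinuousLinearMap.apply ℝ ℝ w) ∘ (fderiv ℝ f) from rfl,
      fderiv_comp x (ContinuousLinearMap.apply ℝ ℝ w).differentiableAt hd2,
      ContinuousLinearMap.fderiv]
    rfl
  unfold pd
  rw [key, key]
  exact second_derivative_symmetric (fun y => (hd1 y).hasFDerivAt) hd2.hasFDerivAt _ _

end helpers

theorem quantum_correction_divergence_form (d : ℕ) (hd : 1 ≤ d)
    (ρ : Ed d → ℝ) (hρ : ContDiff ℝ (⊤ : ℕ∞) ρ) (hpos : ∀ x, 0 < ρ x) :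
    ∀ (j : Fin d) (x : Ed d),
      (1 / 2) * ρ x
          * pd j (fun y => (∑ i, pd i (pd i (fun z => Real.sqrt (ρ z))) y)
              / Real.sqrt (ρ y)) x
        = ∑ i, pd i (fun y =>
            (1 / 4) * pd i (pd j ρ) y
              - pd i (fun z => Real.sqrt (ρ z)) y * pd j (fun z => Real.sqrt (ρ z)) y) x := by
  intro j x
  set s : Ed d → ℝ := fun z => Real.sqrt (ρ z) with hs_def
  -- basic facts about s
  have hspos : ∀ y, 0 < s y := fun y => Real.sqrt_pos.2 (hpos y)
  have hs : ContDiff ℝ (⊤ : ℕ∞) s := by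
    rw [contDiff_iff_contDiffAt]
    intro y
    exact (Real.contDiffAt_sqrt (ne_of_gt (hpos y))).comp y hρ.contDiffAt
  have hD : ∀ (f : Ed d → ℝ), ContDiff ℝ (⊤ : ℕ∞) f → ∀ y, DifferentiableAt ℝ f y :=
    fun f hf y => (hf.differentiable (by simp)) y
  have hρfun : ρ = fun z => s z * s z := by
    funext z; rw [hs_def]; exact (Real.mul_self_sqrt (hpos z).le).symm
  -- smoothness of derived functions
  have hs1 : ∀ i : Fin d, ContDiff ℝ (⊤ : ℕ∞) (pd i s) := fun i => contDiff_pd i hs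
  have hs2 : ∀ i k : Fin d, ContDiff ℝ (⊤ : ℕ∞) (pd i (pd k s)) :=
    fun i k => contDiff_pd i (hs1 k)
  have hs3 : ∀ i k l : Fin d, ContDiff ℝ (⊤ : ℕ∞) (pd i (pd k (pd l s))) :=
    fun i k l => contDiff_pd i (hs2 k l)
  set L : Ed d → ℝ := fun y => ∑ i, pd i (pd i s) y with hL_def
  have hL : ContDiff ℝ (⊤ : ℕ∞) L := ContDiff.sum fun i _ => hs2 i i
  -- first derivative of ρ
  have hρj : pd j ρ = fun y => 2 * (s y * pd j s y) := by
    funext y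
    conv_lhs => rw [hρfun]
    rw [pd_mul (hD s hs y) (hD s hs y)]
    ring
  -- rewrite each summand of the RHS
  have hFi : ∀ i : Fin d,
      (fun y => (1 / 4 : ℝ) * pd i (pd j ρ) y - pd i s y * pd j s y)
      = fun y => (1 / 2) * (s y * pd i (pd j s) y) - (1 / 2) * (pd i s y * pd j s y) := by
    intro i
    funext y
    rw [hρj, pd_const_mul ((hD _ (hs.mul (hs1 j))) y),
      pd_mul (hD s hs y) (hD _ (hs1 j) y)]
    ring
  -- value of each RHS term
  have hterm : ∀ i : Fin d,
      pd i (fun y => (1 / 4 : ℝ) * pd i (pd j ρ) y - pd i s y * pd j s y) x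
      = (1 / 2) * (s x * pd i (pd i (pd j s)) x - pd i (pd i s) x * pd j s x) := by
    intro i
    rw [hFi i]
    have d1 : DifferentiableAt ℝ (fun y => s y * pd i (pd j s) y) x :=
      hD _ (hs.mul (hs2 i j)) x
    have d2 : DifferentiableAt ℝ (fun y => pd i s y * pd j s y) x :=
      hD _ ((hs1 i).mul (hs1 j)) x
    have d3 : DifferentiableAt ℝ (fun y => (1/2 : ℝ) * (s y * pd i (pd j s) y)) x :=
      (hD _ (contDiff_const.mul (hs.mul (hs2 i j))) x)
    have d4 : DifferentiableAt ℝ (fun y => (1/2 : ℝ) * (pd i s y * pd j s y)) x :=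
      (hD _ (contDiff_const.mul ((hs1 i).mul (hs1 j))) x)
    rw [pd_sub d3 d4, pd_const_mul d1, pd_const_mul d2,
      pd_mul (hD s hs x) (hD _ (hs2 i j) x),
      pd_mul (hD _ (hs1 i) x) (hD _ (hs1 j) x)]
    have hsw : pd i (pd j s) = pd j (pd i s) := funext fun y => pd_swap hs i j y
    ring
  -- derivative of Laplacian
  have hpdL : pd j L x = ∑ i, pd i (pd i (pd j s)) x := by
    rw [hL_def, pd_sum Finset.univ _ (fun k _ => hD _ (hs2 k k) x)]
    refine Finset.sum_congr rfl fun i _ => ?_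
    rw [pd_swap (hs1 i) j i x,
      show pd j (pd i s) = pd i (pd j s) from funext fun y => pd_swap hs j i y]
  -- LHS
  have hLHS : pd j (fun y => (∑ i, pd i (pd i s) y) / Real.sqrt (ρ y)) x
      = (pd j L x * s x - L x * pd j s x) / (s x) ^ 2 := by
    have he : (fun y => (∑ i, pd i (pd i s) y) / Real.sqrt (ρ y))
        = fun y => L y / s y := rfl
    rw [he, pd_div (hD L hL x) (hD s hs x) (ne_of_gt (hspos x))]
  rw [hLHS, hpdL, Finset.sum_congr rfl fun i _ => hterm i]
  have hρx : ρ x = s x * s x := by rw [hρfun]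
  rw [hρx]
  have hsx : s x ≠ 0 := ne_of_gt (hspos x)
  have hsum : ∑ i : Fin d, (1/2 : ℝ) * (s x * pd i (pd i (pd j s)) x
        - pd i (pd i s) x * pd j s x)
      = (1/2) * (s x * (∑ i : Fin d, pd i (pd i (pd j s)) x) - L x * pd j s x) := by
    rw [← Finset.mul_sum, Finset.sum_sub_distrib, ← Finset.mul_sum, ← Finset.sum_mul]
  rw [hsum]
  field_simp

end
end

section
/- Fix m > 0, ε ∈ (0,1], q ∈ ℕ with δ := ε^{−1}q^{−1} sufficiently small. Let Λ ⊂ qℤ² be a set such that whenever n₁, n₂, n₃ ∈ Λ and n₁ − n₂ + n₃ ∈ Λ, they form a rectangle (i.e. |n₁|² − |n₂|² + |n₃|² − |n₁−n₂+n₃|² = 0). Then for n₁, n₂, n₃ ∈ Λ with n₄ := n₁ − n₂ + n₃ ∉ Λ, one has |ω(n₁) − ω(n₂) + ω(n₃) − ω(n₄)| ≥ c q², where ω(n) = √(|n|⁴ + 4ε^{−2}m|n|²) and c > 0 is independent of q, ε. -/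
/- STATEMENT 12 (4-wave interactions): fix m > 0. There are constants c₀, c > 0
(independent of q, ε) such that: for ε ∈ (0,1], q ∈ ℕ with δ = ε⁻¹q⁻¹ < c₀, and
Λ ⊂ qℤ²∖{0} with the closure property (if n₁, n₂, n₃ ∈ Λ form a rectangle with
n₄ = n₁−n₂+n₃, i.e. |n₁|²−|n₂|²+|n₃|²−|n₄|² = 0, then n₄ ∈ Λ): for all
n₁, n₂, n₃ ∈ Λ with n₄ := n₁−n₂+n₃ ∉ Λ (n₄ ≠ 0),
|ω(n₁) − ω(n₂) + ω(n₃) − ω(n₄)| ≥ c q², where ω(n) = √(|n|⁴ + 4ε⁻²m|n|²). -/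

noncomputable section

open scoped BigOperators

/-- |n|² for n ∈ ℤ². -/
def nsq (n : Fin 2 → ℤ) : ℝ := ∑ i, ((n i : ℝ)) ^ 2

/-- Linearized frequency ω(n) = √(|n|⁴ + 4ε⁻²m|n|²). -/
def om (m ε : ℝ) (n : Fin 2 → ℤ) : ℝ :=
  Real.sqrt (nsq n ^ 2 + 4 * ε⁻¹ ^ 2 * m * nsq n)

lemma nsq_nonneg (n : Fin 2 → ℤ) : 0 ≤ nsq n := by
  unfold nsq; positivity

lemma om_bounds (m ε : ℝ) (hm : 0 < m) (hε : 0 < ε) (n : Fin 2 → ℤ) :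
    nsq n ≤ om m ε n ∧ om m ε n ≤ nsq n + 2 * ε⁻¹ ^ 2 * m := by
  have hx : 0 ≤ nsq n := nsq_nonneg n
  have ha : 0 ≤ ε⁻¹ ^ 2 * m := by positivity
  constructor
  · have h1 : nsq n ^ 2 ≤ nsq n ^ 2 + 4 * ε⁻¹ ^ 2 * m * nsq n := by nlinarith
    calc nsq n = Real.sqrt (nsq n ^ 2) := by rw [Real.sqrt_sq hx]
    _ ≤ _ := Real.sqrt_le_sqrt h1
  · have h1 : nsq n ^ 2 + 4 * ε⁻¹ ^ 2 * m * nsq n ≤ (nsq n + 2 * ε⁻¹ ^ 2 * m) ^ 2 := by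
      nlinarith
    calc om m ε n ≤ Real.sqrt ((nsq n + 2 * ε⁻¹ ^ 2 * m) ^ 2) := Real.sqrt_le_sqrt h1
    _ = _ := Real.sqrt_sq (by nlinarith)

lemma nsq_mul (q : ℕ) (n : Fin 2 → ℤ) (h : ∀ i, (q : ℤ) ∣ n i) :
    ∃ k : ℤ, nsq n = (q : ℝ) ^ 2 * k := by
  obtain ⟨b0, hb0⟩ := h 0
  obtain ⟨b1, hb1⟩ := h 1
  refine ⟨b0 ^ 2 + b1 ^ 2, ?_⟩
  simp only [nsq, Fin.sum_univ_two, hb0, hb1]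
  push_cast
  ring

theorem four_wave_lower_bound (m : ℝ) (hm : 0 < m) :
    ∃ c₀ > 0, ∃ c > 0, ∀ (ε : ℝ), ε ∈ Set.Ioc (0 : ℝ) 1 → ∀ q : ℕ, 0 < q →
      ε⁻¹ * (q : ℝ)⁻¹ < c₀ →
      ∀ Λ : Set (Fin 2 → ℤ),
        (∀ n ∈ Λ, n ≠ 0 ∧ ∀ i, (q : ℤ) ∣ n i) →
        -- closure property: the fourth vertex of a rectangle with three
        -- vertices in Λ also belongs to Λ
        (∀ n₁ ∈ Λ, ∀ n₂ ∈ Λ, ∀ n₃ ∈ Λ,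
          nsq n₁ - nsq n₂ + nsq n₃ - nsq (n₁ - n₂ + n₃) = 0 → n₁ - n₂ + n₃ ∈ Λ) →
        ∀ n₁ ∈ Λ, ∀ n₂ ∈ Λ, ∀ n₃ ∈ Λ,
          n₁ - n₂ + n₃ ∉ Λ → n₁ - n₂ + n₃ ≠ 0 →
          c * (q : ℝ) ^ 2
            ≤ |om m ε n₁ - om m ε n₂ + om m ε n₃ - om m ε (n₁ - n₂ + n₃)| := by
  refine ⟨Real.sqrt (1 / (8 * m)), Real.sqrt_pos.2 (by positivity), 1 / 2, by norm_num, ?_⟩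
  intro ε hε q hq hδ Λ hΛ hclose n₁ h₁ n₂ h₂ n₃ h₃ h₄ h₄0
  have hε0 : 0 < ε := hε.1
  have hq0 : (0 : ℝ) < q := by exact_mod_cast hq
  obtain ⟨k₁, hk₁⟩ := nsq_mul q n₁ ((hΛ n₁ h₁).2)
  obtain ⟨k₂, hk₂⟩ := nsq_mul q n₂ ((hΛ n₂ h₂).2)
  obtain ⟨k₃, hk₃⟩ := nsq_mul q n₃ ((hΛ n₃ h₃).2)
  obtain ⟨k₄, hk₄⟩ := nsq_mul q (n₁ - n₂ + n₃) (by
    intro i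
    have d1 := (hΛ n₁ h₁).2 i
    have d2 := (hΛ n₂ h₂).2 i
    have d3 := (hΛ n₃ h₃).2 i
    have : (n₁ - n₂ + n₃) i = n₁ i - n₂ i + n₃ i := rfl
    rw [this]
    exact dvd_add (dvd_sub d1 d2) d3)
  set Ω : ℝ := nsq n₁ - nsq n₂ + nsq n₃ - nsq (n₁ - n₂ + n₃) with hΩdef
  have hΩne : Ω ≠ 0 := fun h => h₄ (hclose n₁ h₁ n₂ h₂ n₃ h₃ h)
  have hΩeq : Ω = (q : ℝ) ^ 2 * ((k₁ - k₂ + k₃ - k₄ : ℤ) : ℝ) := by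
    rw [hΩdef, hk₁, hk₂, hk₃, hk₄]; push_cast; ring
  have hKne : (k₁ - k₂ + k₃ - k₄ : ℤ) ≠ 0 := by
    intro h
    apply hΩne
    rw [hΩeq, h]; simp
  have hK1 : (1 : ℝ) ≤ |((k₁ - k₂ + k₃ - k₄ : ℤ) : ℝ)| := by
    rw [← Int.cast_abs]
    exact_mod_cast Int.one_le_abs hKne
  have hΩabs : (q : ℝ) ^ 2 ≤ |Ω| := by
    rw [hΩeq, abs_mul, abs_of_nonneg (by positivity : (0:ℝ) ≤ (q:ℝ)^2)]
    nlinarith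
  -- bounds on om
  obtain ⟨l₁, u₁⟩ := om_bounds m ε hm hε0 n₁
  obtain ⟨l₂, u₂⟩ := om_bounds m ε hm hε0 n₂
  obtain ⟨l₃, u₃⟩ := om_bounds m ε hm hε0 n₃
  obtain ⟨l₄, u₄⟩ := om_bounds m ε hm hε0 (n₁ - n₂ + n₃)
  set D : ℝ := om m ε n₁ - om m ε n₂ + om m ε n₃ - om m ε (n₁ - n₂ + n₃) with hDdef
  set M : ℝ := 2 * ε⁻¹ ^ 2 * m with hMdef
  have hEM : |Ω - D| ≤ 2 * M := by
    rw [abs_le]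
    constructor
    · simp only [hΩdef, hDdef]; linarith
    · simp only [hΩdef, hDdef]; linarith
  have habs : |Ω| - |D| ≤ |Ω - D| := abs_sub_abs_le_abs_sub Ω D
  -- smallness of M
  have hs : Real.sqrt (1 / (8 * m)) ^ 2 = 1 / (8 * m) := Real.sq_sqrt (by positivity)
  have hδ' : ε⁻¹ < Real.sqrt (1 / (8 * m)) * q := by
    have := mul_lt_mul_of_pos_right hδ hq0
    rwa [mul_assoc, inv_mul_cancel₀ (ne_of_gt hq0), mul_one] at this
  have hε2 : ε⁻¹ ^ 2 < (1 / (8 * m)) * (q : ℝ) ^ 2 := by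
    have h0 : 0 ≤ ε⁻¹ := by positivity
    have := pow_lt_pow_left₀ hδ' h0 (n := 2) two_ne_zero
    calc ε⁻¹ ^ 2 < (Real.sqrt (1 / (8 * m)) * q) ^ 2 := this
    _ = (1 / (8 * m)) * (q : ℝ) ^ 2 := by rw [mul_pow, hs]
  have hM : 2 * M < (q : ℝ) ^ 2 / 2 := by
    have h1 := mul_lt_mul_of_pos_left hε2 hm
    have h2 : m * (1 / (8 * m) * (q : ℝ) ^ 2) = (q : ℝ) ^ 2 / 8 := by
      field_simp
    rw [hMdef]
    nlinarith
  linarith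
end
end

section
/- Fix m > 0, ε ∈ (0,1] and δ = ε^{−1}q^{−1}. Let n₁, n₂, n₃, n₄ ∈ qℤ²∖{0} satisfy |n₁|² − |n₂|² + |n₃|² − |n₄|² = 0. Then |ω(n₁) − ω(n₂) + ω(n₃) − ω(n₄)| ≤ C ε^{−4} q^{−2} for some constant C depending only on m, where ω(n) = √(|n|⁴ + 4ε^{−2}m|n|²). -/
/- STATEMENT 13 (near-resonance of rectangles): fix m > 0. There is C > 0
(depending only on m) such that for ε ∈ (0,1], q ∈ ℕ, q > 0, and
n₁, n₂, n₃, n₄ ∈ qℤ²∖{0} with |n₁|² − |n₂|² + |n₃|² − |n₄|² = 0, one has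
|ω(n₁) − ω(n₂) + ω(n₃) − ω(n₄)| ≤ C ε⁻⁴ q⁻², where ω(n) = √(|n|⁴ + 4ε⁻²m|n|²). -/

noncomputable section

open scoped BigOperators

lemma nsq_lower (q : ℕ) (hq : 0 < q) (n : Fin 2 → ℤ) (hn : n ≠ 0)
    (hd : ∀ i, (q : ℤ) ∣ n i) : (q : ℝ) ^ 2 ≤ nsq n := by
  obtain ⟨i, hi⟩ : ∃ i, n i ≠ 0 := by
    by_contra h; push_neg at h; exact hn (funext h)
  have h1 : (q : ℝ) ^ 2 ≤ ((n i : ℝ)) ^ 2 := by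
    have : (q : ℤ) ≤ |n i| := Int.le_of_dvd (abs_pos.mpr hi) ((dvd_abs _ _).mpr (hd i))
    have h2 : (q : ℝ) ≤ |(n i : ℝ)| := by exact_mod_cast (by simpa using this)
    calc (q : ℝ) ^ 2 ≤ |(n i : ℝ)| ^ 2 := by
          apply pow_le_pow_left₀ (by positivity) h2
      _ = ((n i : ℝ)) ^ 2 := sq_abs _
  calc (q:ℝ)^2 ≤ ((n i : ℝ))^2 := h1
    _ ≤ nsq n := by
      unfold nsq
      exact Finset.single_le_sum (f := fun j => ((n j : ℝ))^2)
        (fun j _ => by positivity) (Finset.mem_univ i)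

/-- Key estimate: |√(x² + 4ax) − (x + 2a)| ≤ 4a²/x₀ when 0 < x₀ ≤ x, 0 ≤ a. -/
lemma sqrt_est (a x x0 : ℝ) (ha : 0 ≤ a) (hx0 : 0 < x0) (hx : x0 ≤ x) :
    |Real.sqrt (x ^ 2 + 4 * a * x) - (x + 2 * a)| ≤ 4 * a ^ 2 / x0 := by
  have hxpos : 0 < x := lt_of_lt_of_le hx0 hx
  have harg : 0 ≤ x ^ 2 + 4 * a * x := by positivity
  set s := Real.sqrt (x ^ 2 + 4 * a * x) with hs
  have hsnn : 0 ≤ s := Real.sqrt_nonneg _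
  have hsq : s ^ 2 = x ^ 2 + 4 * a * x := Real.sq_sqrt harg
  have hle : s ≤ x + 2 * a := by
    rw [hs]
    apply Real.sqrt_le_sqrt _ |>.trans
    · exact le_of_eq (Real.sqrt_sq (by positivity))
    · nlinarith
  have key : (x + 2 * a - s) * (x + 2 * a + s) = 4 * a ^ 2 := by nlinarith
  rw [abs_sub_comm, abs_of_nonneg (by linarith)]
  rw [le_div_iff₀ hx0]
  nlinarith [mul_nonneg (sub_nonneg.mpr hle) (sub_nonneg.mpr (by linarith : x0 ≤ x + 2*a + s))]

theorem four_wave_upper_bound (m : ℝ) (hm : 0 < m) :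
    ∃ C > 0, ∀ (ε : ℝ), ε ∈ Set.Ioc (0 : ℝ) 1 → ∀ q : ℕ, 0 < q →
      ∀ n₁ n₂ n₃ n₄ : Fin 2 → ℤ,
        n₁ ≠ 0 → n₂ ≠ 0 → n₃ ≠ 0 → n₄ ≠ 0 →
        (∀ i, (q : ℤ) ∣ n₁ i) → (∀ i, (q : ℤ) ∣ n₂ i) →
        (∀ i, (q : ℤ) ∣ n₃ i) → (∀ i, (q : ℤ) ∣ n₄ i) →
        nsq n₁ - nsq n₂ + nsq n₃ - nsq n₄ = 0 →
        |om m ε n₁ - om m ε n₂ + om m ε n₃ - om m ε n₄|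
          ≤ C * ε⁻¹ ^ 4 * ((q : ℝ) ^ 2)⁻¹ := by
  refine ⟨16 * m ^ 2, by positivity, ?_⟩
  rintro ε ⟨hε0, hε1⟩ q hq n₁ n₂ n₃ n₄ h1 h2 h3 h4 d1 d2 d3 d4 hres
  set a := ε⁻¹ ^ 2 * m with ha
  have haa : 0 ≤ a := by positivity
  have hq2 : (0:ℝ) < (q:ℝ)^2 := by positivity
  have est : ∀ n : Fin 2 → ℤ, n ≠ 0 → (∀ i, (q : ℤ) ∣ n i) →
      |om m ε n - (nsq n + 2 * a)| ≤ 4 * a ^ 2 / (q:ℝ)^2 := by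
    intro n hn hd
    have hlb := nsq_lower q hq n hn hd
    have := sqrt_est a (nsq n) ((q:ℝ)^2) haa hq2 hlb
    unfold om
    convert this using 3
    rw [ha]; ring
  have e1 := est n₁ h1 d1
  have e2 := est n₂ h2 d2
  have e3 := est n₃ h3 d3
  have e4 := est n₄ h4 d4
  have key : om m ε n₁ - om m ε n₂ + om m ε n₃ - om m ε n₄ =
      (om m ε n₁ - (nsq n₁ + 2*a)) - (om m ε n₂ - (nsq n₂ + 2*a))
        + (om m ε n₃ - (nsq n₃ + 2*a)) - (om m ε n₄ - (nsq n₄ + 2*a)) := by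
    linarith
  rw [key]
  have habs : ∀ x y z w : ℝ, |x - y + z - w| ≤ |x| + |y| + |z| + |w| := by
    intro x y z w
    calc |x - y + z - w| ≤ |x - y + z| + |w| := abs_sub _ _
      _ ≤ |x - y| + |z| + |w| := by gcongr; exact abs_add_le _ _
      _ ≤ |x| + |y| + |z| + |w| := by gcongr; exact abs_sub _ _
  calc _ ≤ _ := habs _ _ _ _
    _ ≤ 4 * (4 * a ^ 2 / (q:ℝ)^2) := by linarith
    _ = 16 * m ^ 2 * ε⁻¹ ^ 4 * ((q : ℝ) ^ 2)⁻¹ := by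
        rw [ha]; field_simp; ring
  done

end
end
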